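/- Consider a three-agent instance that contains no (2/3)-high-valued good (v_a(g) < (2/3)·MMS_a for every agent a and good g) and in which no subset of whole goods is a reducible bundle with respect to any agent. Then the instance admits a (2/3)-MMS allocation. -/

import Mathlib

open scoped BigOperators Classical

/-- An instance of fair division with subjective divisibility: `n` agents and `m` goods,
each good of total amount 1.  Each agent `i` assigns a nonnegative value `v i g` to each
good `g` and regards each good as either divisible or indivisible for her. -/
structure FairDivision (n m : ℕ) where
  /-- agent `i`'s value for good `g` -/
  v : Fin n → Fin m → ℝ
  v_nonneg : ∀ i g, 0 ≤ v i g
  /-- `divisible i g` means agent `i` regards good `g` as divisible -/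
  divisible : Fin n → Fin m → Prop

namespace FairDivision

variable {n m : ℕ}

/-- Agent `i`'s utility from receiving fraction `t ∈ [0,1]` of good `g`:
`t * v i g` if `g` is divisible for `i`; `v i g` if `g` is indivisible for `i` and `t = 1`;
and `0` if `g` is indivisible for `i` and `t < 1`. -/
noncomputable def frUtil (I : FairDivision n m) (i : Fin n) (g : Fin m) (t : ℝ) : ℝ :=
  if I.divisible i g then t * I.v i g else if t = 1 then I.v i g else 0

/-- Agent `i`'s (additive) utility for a bundle `b`, given by the fraction `b g` of each good. -/
noncomputable def util (I : FairDivision n m) (i : Fin n) (b : Fin m → ℝ) : ℝ :=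
  ∑ g, I.frUtil i g (b g)

/-- Agent `i`'s utility for the bundle `b` with good `g` omitted. -/
noncomputable def utilMinus (I : FairDivision n m) (i : Fin n) (b : Fin m → ℝ) (g : Fin m) : ℝ :=
  ∑ g' ∈ Finset.univ.erase g, I.frUtil i g' (b g')

/-- A complete allocation: fractions in `[0,1]` summing to `1` for every good. -/
def IsAllocation (I : FairDivision n m) (x : Fin n → Fin m → ℝ) : Prop :=
  (∀ i g, 0 ≤ x i g ∧ x i g ≤ 1) ∧ ∀ g, ∑ i, x i g = 1

/-- A partial allocation: fractions in `[0,1]` summing to at most `1` for every good. -/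
def IsPartialAllocation (I : FairDivision n m) (x : Fin n → Fin m → ℝ) : Prop :=
  (∀ i g, 0 ≤ x i g ∧ x i g ≤ 1) ∧ ∀ g, ∑ i, x i g ≤ 1

/-- The maximin share of agent `i`: the supremum, over all fractional `n`-partitions
`P` of the goods, of the minimum over the parts `P j` of agent `i`'s utility. -/
noncomputable def MMS (I : FairDivision n m) (i : Fin n) : ℝ :=
  sSup { r : ℝ | ∃ P : Fin n → Fin m → ℝ, I.IsAllocation P ∧ r = ⨅ j, I.util i (P j) }

/-- Non-wastefulness: every positive fraction an agent receives yields her positive utility. -/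
def NonWasteful (I : FairDivision n m) (x : Fin n → Fin m → ℝ) : Prop :=
  ∀ i g, 0 < x i g → 0 < I.frUtil i g (x i g)

/-- Envy-freeness. -/
def EF (I : FairDivision n m) (x : Fin n → Fin m → ℝ) : Prop :=
  ∀ i j, I.util i (x j) ≤ I.util i (x i)

/-- Envy-freeness for mixed goods: for all agents `i, j`, if every good `j` receives a
positive fraction of is indivisible for `i`, then `i` does not envy `j` after removing some
such good from `j`'s bundle; otherwise `i` does not envy `j`. -/
def EFM (I : FairDivision n m) (x : Fin n → Fin m → ℝ) : Prop :=
  ∀ i j,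
    ((∀ g, 0 < x j g → ¬ I.divisible i g) →
      ∃ g, 0 < x j g ∧ I.utilMinus i (x j) g ≤ I.util i (x i)) ∧
    ((¬ ∀ g, 0 < x j g → ¬ I.divisible i g) → I.util i (x j) ≤ I.util i (x i))

/-- EFXM: as EFM, but the envy must vanish after removing any positively valued such good. -/
def EFXM (I : FairDivision n m) (x : Fin n → Fin m → ℝ) : Prop :=
  ∀ i j,
    ((∀ g, 0 < x j g → ¬ I.divisible i g) →
      ∀ g, 0 < x j g → 0 < I.v i g → I.utilMinus i (x j) g ≤ I.util i (x i)) ∧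
    ((¬ ∀ g, 0 < x j g → ¬ I.divisible i g) → I.util i (x j) ≤ I.util i (x i))

/-- EF1M: if `j`'s bundle contains (a positive fraction of) some good that `i` regards as
indivisible and values positively, the envy of `i` must vanish after removing some such good;
otherwise `i` does not envy `j`. -/
def EF1M (I : FairDivision n m) (x : Fin n → Fin m → ℝ) : Prop :=
  ∀ i j,
    ((∃ g, 0 < x j g ∧ ¬ I.divisible i g ∧ 0 < I.v i g) →
      ∃ g, 0 < x j g ∧ ¬ I.divisible i g ∧ 0 < I.v i g ∧
        I.utilMinus i (x j) g ≤ I.util i (x i)) ∧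
    ((¬ ∃ g, 0 < x j g ∧ ¬ I.divisible i g ∧ 0 < I.v i g) → I.util i (x j) ≤ I.util i (x i))

/-- Pareto optimality (among complete allocations). -/
def ParetoOptimal (I : FairDivision n m) (x : Fin n → Fin m → ℝ) : Prop :=
  ¬ ∃ y, I.IsAllocation y ∧ (∀ i, I.util i (x i) ≤ I.util i (y i)) ∧
    ∃ i, I.util i (x i) < I.util i (y i)

/-- In a 3-agent instance, `B` (a set of whole goods) is a reducible bundle with respect to
agent `i`: `u_i(B) ≥ (2/3)·MMS_i`, `u_j(M∖B) ≥ 2·MMS_j` for some agent `j ≠ i`, and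
`u_k(M∖B) ≥ (4/3)·MMS_k` for the remaining agent `k`. -/
def IsReducible (I : FairDivision 3 m) (B : Finset (Fin m)) (i : Fin 3) : Prop :=
  2 / 3 * I.MMS i ≤ ∑ g ∈ B, I.v i g ∧
    ∃ j, j ≠ i ∧ 2 * I.MMS j ≤ ∑ g ∈ Bᶜ, I.v j g ∧
      ∀ k, k ≠ i → k ≠ j → 4 / 3 * I.MMS k ≤ ∑ g ∈ Bᶜ, I.v k g

end FairDivision

/-!
Let `B₁` be an inclusion-minimal bundle that some agent values at `2/3` of her MMS, and `B₂` one
inside `B₁ᶜ`. Since no good is `2/3`-high-valued, such a bundle is worth less than `4/3 MMS` to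
everyone, so its complement is worth at least `4/3 MMS` to everyone; as the bundle is not
reducible, it is then worth more than `MMS` to everyone, and each of its goods more than `MMS/3`.
So any two goods of `F = B₁ ∪ B₂` satisfy any agent. If `Fᶜ`, or `Fᶜ` plus a fifth good of `F`,
satisfies the third agent we are done. Otherwise `F` has four goods, any two worth more than
`MMS` to everyone. Either two agents can each complete one good of `F` with a part of `Fᶜ`, or
`Fᶜ` is concentrated in a single good `E`; a good of `F ∪ {E}` that two agents regard as divisible
is then split in halves between them, and if there is none, some agent regards four of these five
goods as indivisible, which forces her MMS strictly below itself.
-/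

lemma Finset.exists_subset_minimal {α : Type*} (P : Finset α → Prop) {G : Finset α} (hG : P G) :
    ∃ B ⊆ G, P B ∧ ∀ B' ⊂ B, ¬ P B' := by
  induction G using Finset.strongInduction with
  | H G ih =>
    by_cases h : ∃ B' ⊂ G, P B'
    · obtain ⟨B', hB'G, hB'⟩ := h
      obtain ⟨B, hBB', hB, hmin⟩ := ih B' hB'G hB'
      exact ⟨B, hBB'.trans hB'G.subset, hB, hmin⟩
    · push Not at h
      exact ⟨G, subset_rfl, hG, h⟩

lemma Finset.exists_top_two {α β : Type*} [LinearOrder β] [DecidableEq α] {s : Finset α}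
    (hs : 2 ≤ s.card) (f : α → β) :
    ∃ x ∈ s, ∃ y ∈ s, x ≠ y ∧ f y ≤ f x ∧ ∀ z ∈ s, z ≠ x → f z ≤ f y := by
  obtain ⟨x, hx, hxmax⟩ := s.exists_max_image f (Finset.card_pos.mp (by omega))
  obtain ⟨y, hy, hymax⟩ := (s.erase x).exists_max_image f
    (Finset.card_pos.mp (by rw [Finset.card_erase_of_mem hx]; omega))
  exact ⟨x, hx, y, Finset.mem_of_mem_erase hy, (Finset.ne_of_mem_erase hy).symm,
    hxmax y (Finset.mem_of_mem_erase hy), fun z hz hzx => hymax z (Finset.mem_erase.mpr ⟨hzx, hz⟩)⟩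

lemma Finset.exists_mem_forall_sum_erase_lt {κ α : Type*} [Nontrivial κ] [DecidableEq α]
    {C : Finset α} {f : κ → α → ℝ} {d : κ → ℝ} (hd : ∀ a, 0 < d a)
    (hC : ∀ a, 3 * d a < ∑ x ∈ C, f a x)
    (hsplit : ∀ q r, q ≠ r → ∀ S ⊆ C, ∑ x ∈ S, f q x < d q ∨ ∑ x ∈ C \ S, f r x < d r) :
    ∃ e ∈ C, ∀ a, ∑ x ∈ C.erase e, f a x < d a := by
  obtain ⟨q, r, hqr⟩ := exists_pair_ne κ
  obtain ⟨S, hSC, hS, hmin⟩ :=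
    Finset.exists_subset_minimal (fun S => d q ≤ ∑ x ∈ S, f q x) (G := C)
      (by linarith [hC q, hd q])
  have hsd : ∀ a, ∑ x ∈ C \ S, f a x + ∑ x ∈ S, f a x = ∑ x ∈ C, f a x :=
    fun a => Finset.sum_sdiff hSC
  have hrest : ∀ a, a ≠ q → ∑ x ∈ C \ S, f a x < d a :=
    fun a ha => (hsplit q a ha.symm S hSC).resolve_left (not_lt.mpr hS)
  have hq : ∑ x ∈ C \ S, f q x < d q :=
    (hsplit r q hqr.symm S hSC).resolve_left <| not_lt.mpr <| by
      linarith [hrest r hqr.symm, hsd r, hC r, hd r]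
  obtain ⟨e, he⟩ : ∃ e, S = {e} := by
    obtain ⟨e, he⟩ : S.Nonempty := Finset.nonempty_iff_ne_empty.mpr <| by
      rintro rfl
      linarith [hd q, Finset.sum_empty (f := f q)]
    refine ⟨e, Finset.eq_singleton_iff_unique_mem.mpr ⟨he, fun x hx => by_contra fun hxe => ?_⟩⟩
    have herase : ∑ x ∈ S.erase e, f q x < d q :=
      lt_of_not_ge (hmin _ (Finset.erase_ssubset he))
    have hsingle : {e} ⊂ S := Finset.ssubset_iff_subset_ne.mpr
      ⟨Finset.singleton_subset_iff.mpr he, fun h => hxe (Finset.mem_singleton.mp (h ▸ hx))⟩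
    refine hmin _ hsingle ?_
    rw [Finset.sum_singleton]
    linarith [Finset.sum_erase_add S (f q) he, hsd q, hC q]
  refine ⟨e, hSC (he ▸ Finset.mem_singleton_self e), fun a => ?_⟩
  rw [← Finset.sdiff_singleton_eq_erase, ← he]
  by_cases ha : a = q
  · exact ha ▸ hq
  · exact hrest a ha

lemma Finset.exists_mem_of_forall_exists_ne {κ α : Type*} [Fintype κ] [DecidableEq α]
    {T : Finset α} {D : κ → α → Prop} (hT : T.card < 2 * Fintype.card κ) (hne : T.Nonempty)
    (h : ∀ y, ∀ σ ∈ T, ∃ g ∈ T, g ≠ σ ∧ D y g) :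
    ∃ g ∈ T, ∃ a b, a ≠ b ∧ D a g ∧ D b g := by
  classical
  by_contra! hno
  have htwo : ∀ y, 2 ≤ (T.filter (D y)).card := fun y => by
    obtain ⟨σ, hσ⟩ := hne
    obtain ⟨g, hg, -, hgy⟩ := h y σ hσ
    obtain ⟨g', hg', hg'g, hg'y⟩ := h y g hg
    exact Finset.one_lt_card.mpr ⟨g, by simp [hg, hgy], g', by simp [hg', hg'y], hg'g.symm⟩
  have hsum : ∑ y, (T.filter (D y)).card ≤ T.card := by
    simp_rw [Finset.card_filter]
    rw [Finset.sum_comm, Finset.card_eq_sum_ones T]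
    refine Finset.sum_le_sum fun g hg => ?_
    rw [← Finset.card_filter]
    exact Finset.card_le_one.mpr fun a ha b hb => by_contra fun hab =>
      hno g hg a b hab (Finset.mem_filter.mp ha).2 (Finset.mem_filter.mp hb).2
  have := Finset.card_nsmul_le_sum Finset.univ _ 2 fun y _ => htwo y
  simp only [Finset.card_univ, smul_eq_mul] at this
  omega

lemma Finset.exists_eq_empty_or_card_eq_one {α : Type*} [DecidableEq α] {S : Finset α}
    (hS : S.card ≤ 4) {A : Fin 3 → Finset α} (hAS : ∀ j, A j ⊆ S)
    (hA : ∀ j k, j ≠ k → Disjoint (A j) (A k)) :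
    (∃ j, A j = ∅) ∨ ∃ j k, j ≠ k ∧ (A j).card = 1 ∧ (A k).card = 1 := by
  have hsum : ∑ j, (A j).card ≤ 4 := by
    rw [← Finset.card_biUnion fun j _ k _ hjk => hA j k hjk]
    exact (Finset.card_le_card (Finset.biUnion_subset.mpr fun j _ => hAS j)).trans hS
  by_contra! h
  have hpos : ∀ j, 1 ≤ (A j).card := fun j => Finset.card_pos.mpr (h.1 j)
  rw [Fin.sum_univ_three] at hsum
  have := h.2 0 1; have := h.2 0 2; have := h.2 1 2
  have := hpos 0; have := hpos 1; have := hpos 2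
  simp only [ne_eq, Fin.reduceEq, not_false_eq_true, forall_const] at *
  omega

lemma Fin.eq_or_eq_or_eq {q r w : Fin 3} (hqr : q ≠ r) (hqw : q ≠ w) (hrw : r ≠ w) (i : Fin 3) :
    i = q ∨ i = r ∨ i = w := by
  revert q r w i; decide

lemma Fin.exists_ne_ne {q r : Fin 3} (hqr : q ≠ r) : ∃ w, q ≠ w ∧ r ≠ w := by
  revert q r; decide

namespace FairDivision

section Utility

variable {n m : ℕ} (I : FairDivision n m) {i : Fin n} {g : Fin m} {t : ℝ}

lemma frUtil_nonneg (ht : 0 ≤ t) : 0 ≤ I.frUtil i g t := by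
  unfold frUtil
  split_ifs
  exacts [mul_nonneg ht (I.v_nonneg i g), I.v_nonneg i g, le_rfl]

lemma frUtil_le_mul (h0 : 0 ≤ t) : I.frUtil i g t ≤ t * I.v i g := by
  unfold frUtil
  split_ifs with _ ht
  · exact le_rfl
  · rw [ht, one_mul]
  · exact mul_nonneg h0 (I.v_nonneg i g)

@[simp]
lemma frUtil_one : I.frUtil i g 1 = I.v i g := by
  simp [frUtil]

lemma frUtil_of_divisible (h : I.divisible i g) (t : ℝ) : I.frUtil i g t = t * I.v i g := by
  simp [frUtil, h]

lemma util_nonneg {b : Fin m → ℝ} (hb : ∀ g, 0 ≤ b g) : 0 ≤ I.util i b :=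
  Finset.sum_nonneg fun g _ => I.frUtil_nonneg (hb g)

lemma sum_util_le_sum {P : Fin n → Fin m → ℝ} (hP : I.IsAllocation P) (i : Fin n) :
    ∑ j, I.util i (P j) ≤ ∑ g, I.v i g :=
  calc ∑ j, I.util i (P j) ≤ ∑ j, ∑ g, P j g * I.v i g :=
        Finset.sum_le_sum fun j _ => Finset.sum_le_sum fun g _ =>
          I.frUtil_le_mul (hP.1 j g).1
    _ = ∑ g, I.v i g := by
        rw [Finset.sum_comm]
        simp [← Finset.sum_mul, hP.2]

lemma MMS_nonneg (i : Fin n) : 0 ≤ I.MMS i :=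
  Real.sSup_nonneg <| by
    rintro _ ⟨P, hP, rfl⟩
    exact Real.iInf_nonneg fun j => I.util_nonneg fun g => (hP.1 j g).1

lemma card_mul_MMS_le_sum (i : Fin n) : n * I.MMS i ≤ ∑ g, I.v i g := by
  rcases Nat.eq_zero_or_pos n with rfl | hn
  · simpa using Finset.sum_nonneg fun g _ => I.v_nonneg i g
  rw [← le_div_iff₀' (by exact_mod_cast hn)]
  refine Real.sSup_le ?_ (div_nonneg (Finset.sum_nonneg fun g _ => I.v_nonneg i g) n.cast_nonneg)
  rintro _ ⟨P, hP, rfl⟩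
  rw [le_div_iff₀' (by exact_mod_cast hn)]
  have hbdd : BddBelow (Set.range fun j => I.util i (P j)) := (Set.finite_range _).bddBelow
  calc (n : ℝ) * ⨅ j, I.util i (P j) = ∑ _j : Fin n, ⨅ j, I.util i (P j) := by simp
    _ ≤ ∑ j, I.util i (P j) := Finset.sum_le_sum fun j _ => ciInf_le hbdd j
    _ ≤ ∑ g, I.v i g := I.sum_util_le_sum hP i

end Utility

section Allocation

variable {n m : ℕ} (I : FairDivision n m)

def IsApproxMMS (α : ℝ) (x : Fin n → Fin m → ℝ) : Prop :=
  I.IsAllocation x ∧ ∀ i, α * I.MMS i ≤ I.util i (x i)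

def NoHighValuedGood (β : ℝ) : Prop :=
  ∀ a g, I.v a g < β * I.MMS a

/-- Agents `o g` and `o' g` receive half of good `g` each, so `g` goes whole to an agent who is
both. -/
noncomputable def halfShare (o o' : Fin m → Fin n) : Fin n → Fin m → ℝ :=
  fun i g => ((if o g = i then 1 else 0) + (if o' g = i then 1 else 0)) / 2

lemma isAllocation_halfShare (o o' : Fin m → Fin n) : I.IsAllocation (halfShare o o') := by
  refine ⟨fun i g => ?_, fun g => ?_⟩
  · unfold halfShare
    constructor <;> split_ifs <;> norm_num
  · simp [halfShare, ← Finset.sum_div, Finset.sum_add_distrib]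

lemma sum_add_half_sum_le_util_halfShare {o o' : Fin m → Fin n} {i : Fin n}
    {X H : Finset (Fin m)} (hXH : Disjoint X H) (hX : ∀ g ∈ X, o g = i ∧ o' g = i)
    (hH : ∀ g ∈ H, (o g = i ∨ o' g = i) ∧ I.divisible i g) :
    ∑ g ∈ X, I.v i g + (∑ g ∈ H, I.v i g) / 2 ≤ I.util i (halfShare o o' i) := by
  have hx : ∀ g, 0 ≤ halfShare o o' i g := fun g => by
    unfold halfShare; split_ifs <;> norm_num
  have hXeq : ∑ g ∈ X, I.v i g = ∑ g ∈ X, I.frUtil i g (halfShare o o' i g) :=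
    Finset.sum_congr rfl fun g hg => by simp [halfShare, (hX g hg).1, (hX g hg).2]
  have hHle : (∑ g ∈ H, I.v i g) / 2 ≤ ∑ g ∈ H, I.frUtil i g (halfShare o o' i g) := by
    rw [Finset.sum_div]
    refine Finset.sum_le_sum fun g hg => ?_
    rw [I.frUtil_of_divisible (hH g hg).2]
    have : 1 / 2 ≤ halfShare o o' i g := by
      unfold halfShare; rcases (hH g hg).1 with h | h <;> simp only [h] <;> split_ifs <;> norm_num
    nlinarith [I.v_nonneg i g]
  calc ∑ g ∈ X, I.v i g + (∑ g ∈ H, I.v i g) / 2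
      ≤ ∑ g ∈ X ∪ H, I.frUtil i g (halfShare o o' i g) := by
        rw [Finset.sum_union hXH]; linarith
    _ ≤ I.util i (halfShare o o' i) :=
        Finset.sum_le_sum_of_subset_of_nonneg (Finset.subset_univ _)
          fun g _ _ => I.frUtil_nonneg (hx g)

end Allocation

section ThreeAgents

variable {m : ℕ} (I : FairDivision 3 m)

def bundleOwner (q r w : Fin 3) (Xq Xr : Finset (Fin m)) (g : Fin m) : Fin 3 :=
  if g ∈ Xq then q else if g ∈ Xr then r else w

lemma exists_isApproxMMS_of_bundles {α : ℝ} {q r w : Fin 3} (hqr : q ≠ r) (hqw : q ≠ w)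
    (hrw : r ≠ w) {Xq Xr Xw : Finset (Fin m)} (dqr : Disjoint Xq Xr) (dqw : Disjoint Xq Xw)
    (drw : Disjoint Xr Xw) (hq : α * I.MMS q ≤ ∑ g ∈ Xq, I.v q g)
    (hr : α * I.MMS r ≤ ∑ g ∈ Xr, I.v r g) (hw : α * I.MMS w ≤ ∑ g ∈ Xw, I.v w g) :
    ∃ x, I.IsApproxMMS α x := by
  set o := bundleOwner q r w Xq Xr
  refine ⟨halfShare o o, I.isAllocation_halfShare o o, fun i => ?_⟩
  have key : ∀ X : Finset (Fin m), (∀ g ∈ X, o g = i) →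
      ∑ g ∈ X, I.v i g ≤ I.util i (halfShare o o i) := fun X hX => by
    simpa using I.sum_add_half_sum_le_util_halfShare (Finset.disjoint_empty_right X)
      (fun g hg => ⟨hX g hg, hX g hg⟩) (H := ∅) (by simp)
  rcases Fin.eq_or_eq_or_eq hqr hqw hrw i with rfl | rfl | rfl
  · exact hq.trans (key Xq fun g hg => by simp [o, bundleOwner, hg])
  · refine hr.trans (key Xr fun g hg => ?_)
    simp [o, bundleOwner, hg, Finset.disjoint_right.mp dqr hg]
  · refine hw.trans (key Xw fun g hg => ?_)
    simp [o, bundleOwner, Finset.disjoint_right.mp dqw hg, Finset.disjoint_right.mp drw hg]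

lemma exists_isApproxMMS_of_bundles_of_halves {α : ℝ} {q r w : Fin 3} (hqr : q ≠ r)
    (hqw : q ≠ w) (hrw : r ≠ w) {Xq Xr Xw : Finset (Fin m)} (dqr : Disjoint Xq Xr)
    (dqw : Disjoint Xq Xw) (drw : Disjoint Xr Xw) {σ : Fin m} (hσq : σ ∉ Xq) (hσr : σ ∉ Xr)
    (hσw : σ ∉ Xw) (hdq : I.divisible q σ) (hdr : I.divisible r σ)
    (hq : α * I.MMS q ≤ ∑ g ∈ Xq, I.v q g + I.v q σ / 2)
    (hr : α * I.MMS r ≤ ∑ g ∈ Xr, I.v r g + I.v r σ / 2)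
    (hw : α * I.MMS w ≤ ∑ g ∈ Xw, I.v w g) :
    ∃ x, I.IsApproxMMS α x := by
  set o := Function.update (bundleOwner q r w Xq Xr) σ q
  set o' := Function.update (bundleOwner q r w Xq Xr) σ r
  refine ⟨halfShare o o', I.isAllocation_halfShare o o', fun i => ?_⟩
  have key : ∀ X H : Finset (Fin m), σ ∉ X → (∀ g ∈ X, bundleOwner q r w Xq Xr g = i) →
      (∀ g ∈ H, g = σ ∧ (i = q ∨ i = r) ∧ I.divisible i σ) →
      ∑ g ∈ X, I.v i g + (∑ g ∈ H, I.v i g) / 2 ≤ I.util i (halfShare o o' i) := by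
    intro X H hσX hX hH
    refine I.sum_add_half_sum_le_util_halfShare ?_ (fun g hg => ?_) (fun g hg => ?_)
    · exact Finset.disjoint_right.mpr fun g hg hgX => hσX ((hH g hg).1 ▸ hgX)
    · have hgσ : g ≠ σ := fun h => hσX (h ▸ hg)
      simp [o, o', hgσ, hX g hg]
    · obtain ⟨rfl, hi, hdi⟩ := hH g hg
      rcases hi with rfl | rfl <;> simp [o, o', hdi]
  rcases Fin.eq_or_eq_or_eq hqr hqw hrw i with rfl | rfl | rfl
  · have := key Xq {σ} hσq (fun g hg => by simp [bundleOwner, hg]) (by simp [hdq])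
    rw [Finset.sum_singleton] at this
    exact hq.trans this
  · have := key Xr {σ} hσr (fun g hg => by simp [bundleOwner, hg, Finset.disjoint_right.mp dqr hg])
      (by simp [hdr])
    rw [Finset.sum_singleton] at this
    exact hr.trans this
  · have := key Xw ∅ hσw (fun g hg => by
      simp [bundleOwner, Finset.disjoint_right.mp dqw hg, Finset.disjoint_right.mp drw hg])
      (by simp)
    rw [Finset.sum_empty, zero_div, add_zero] at this
    exact hw.trans this

end ThreeAgents

section Indivisible

variable {n m : ℕ}

lemma IsAllocation.add_le_one {I : FairDivision n m} {P : Fin n → Fin m → ℝ}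
    (hP : I.IsAllocation P) {j k : Fin n} (hjk : j ≠ k) (g : Fin m) : P j g + P k g ≤ 1 := by
  rw [← hP.2 g, ← Finset.sum_pair hjk (f := fun i => P i g)]
  exact Finset.sum_le_sum_of_subset_of_nonneg (Finset.subset_univ _) fun i _ _ => (hP.1 i g).1

lemma util_le_of_not_divisible (I : FairDivision n m) {y : Fin n} {S : Finset (Fin m)}
    (hS : ∀ g ∈ S, ¬ I.divisible y g) {b : Fin m → ℝ} (hb : ∀ g, 0 ≤ b g) :
    I.util y b ≤ ∑ g ∈ S.filter (b · = 1), I.v y g + ∑ g ∈ Sᶜ, b g * I.v y g := by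
  rw [util, ← Finset.sum_add_sum_compl S, Finset.sum_filter]
  gcongr with g hg g
  · simp [frUtil, hS g hg]
  · exact I.frUtil_le_mul (hb g)

/-- In a fractional 3-partition, the at most four goods of `S` that `y` regards as indivisible
are held whole by disjoint sets of parts: some part holds none of them, or two parts hold exactly
one each. -/
lemma iInf_util_le_of_not_divisible (I : FairDivision 3 m) {y : Fin 3} {S : Finset (Fin m)}
    (hS4 : S.card ≤ 4) (hS : ∀ g ∈ S, ¬ I.divisible y g) {P : Fin 3 → Fin m → ℝ}
    (hP : I.IsAllocation P) :
    ⨅ j, I.util y (P j) ≤ ∑ g ∈ Sᶜ, I.v y g ∨ ∃ u ∈ S, ∃ u' ∈ S, u ≠ u' ∧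
      2 * ⨅ j, I.util y (P j) ≤ I.v y u + I.v y u' + ∑ g ∈ Sᶜ, I.v y g := by
  have hinf : ∀ j, ⨅ j, I.util y (P j) ≤ I.util y (P j) :=
    ciInf_le (Set.finite_range _).bddBelow
  have hutil : ∀ j, I.util y (P j) ≤
      ∑ g ∈ S.filter (P j · = 1), I.v y g + ∑ g ∈ Sᶜ, P j g * I.v y g :=
    fun j => I.util_le_of_not_divisible hS fun g => (hP.1 j g).1
  have hdisj : ∀ j k, j ≠ k → Disjoint (S.filter (P j · = 1)) (S.filter (P k · = 1)) :=
    fun j k hjk => Finset.disjoint_filter.mpr fun g _ hj hk => by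
      linarith [hP.add_le_one hjk g]
  rcases Finset.exists_eq_empty_or_card_eq_one hS4 (fun j => Finset.filter_subset _ S) hdisj with
    ⟨j, hj⟩ | ⟨j, k, hjk, hj, hk⟩
  · left
    have hrest : ∑ g ∈ Sᶜ, P j g * I.v y g ≤ ∑ g ∈ Sᶜ, I.v y g :=
      Finset.sum_le_sum fun g _ => mul_le_of_le_one_left (I.v_nonneg y g) (hP.1 j g).2
    linarith [hinf j, hutil j, hj ▸ Finset.sum_empty (f := I.v y)]
  · right
    obtain ⟨u, hu⟩ := Finset.card_eq_one.mp hj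
    obtain ⟨u', hu'⟩ := Finset.card_eq_one.mp hk
    have huS : u ∈ S ∧ P j u = 1 := Finset.mem_filter.mp (hu ▸ Finset.mem_singleton_self u)
    have hu'S : u' ∈ S ∧ P k u' = 1 := Finset.mem_filter.mp (hu' ▸ Finset.mem_singleton_self u')
    have hrest : ∑ g ∈ Sᶜ, P j g * I.v y g + ∑ g ∈ Sᶜ, P k g * I.v y g ≤ ∑ g ∈ Sᶜ, I.v y g := by
      rw [← Finset.sum_add_distrib]
      refine Finset.sum_le_sum fun g _ => ?_
      nlinarith [hP.add_le_one hjk g, I.v_nonneg y g]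
    refine ⟨u, huS.1, u', hu'S.1, fun h => ?_, ?_⟩
    · exact Finset.disjoint_left.mp (hdisj j k hjk) (hu ▸ Finset.mem_singleton_self u)
        (h ▸ hu' ▸ Finset.mem_singleton_self u')
    · have hj' := hutil j
      have hk' := hutil k
      rw [hu, Finset.sum_singleton] at hj'
      rw [hu', Finset.sum_singleton] at hk'
      linarith [hinf j, hinf k]

lemma MMS_lt_of_not_divisible (I : FairDivision 3 m) {y : Fin 3} {S : Finset (Fin m)}
    (hS4 : S.card ≤ 4) (hS : ∀ g ∈ S, ¬ I.divisible y g) {c : ℝ}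
    (hrest : ∑ g ∈ Sᶜ, I.v y g < c)
    (hpair : ∀ u ∈ S, ∀ u' ∈ S, u ≠ u' → I.v y u + I.v y u' + ∑ g ∈ Sᶜ, I.v y g < 2 * c) :
    I.MMS y < c := by
  set W := ∑ g ∈ Sᶜ, I.v y g
  set B := insert W (S.offDiag.image fun p => (I.v y p.1 + I.v y p.2 + W) / 2)
  have hB : B.Nonempty := Finset.insert_nonempty _ _
  have hWB : W ≤ B.max' hB := B.le_max' W (Finset.mem_insert_self _ _)
  have hpairB : ∀ u ∈ S, ∀ u' ∈ S, u ≠ u' →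
      (I.v y u + I.v y u' + W) / 2 ≤ B.max' hB :=
    fun u hu u' hu' huu' => B.le_max' _ (Finset.mem_insert_of_mem (Finset.mem_image.mpr
      ⟨(u, u'), Finset.mem_offDiag.mpr ⟨hu, hu', huu'⟩, rfl⟩))
  refine lt_of_le_of_lt (Real.sSup_le ?_ ?_) ((B.max'_lt_iff hB).mpr ?_)
  · rintro _ ⟨P, hP, rfl⟩
    rcases I.iInf_util_le_of_not_divisible hS4 hS hP with h | ⟨u, hu, u', hu', huu', h⟩
    · exact h.trans hWB
    · linarith [hpairB u hu u' hu' huu']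
  · exact (Finset.sum_nonneg fun g _ => I.v_nonneg y g).trans hWB
  · intro x hx
    rcases Finset.mem_insert.mp hx with rfl | hx
    · exact hrest
    · obtain ⟨p, hp, rfl⟩ := Finset.mem_image.mp hx
      obtain ⟨h1, h2, h12⟩ := Finset.mem_offDiag.mp hp
      linarith [hpair _ h1 _ h2 h12]

end Indivisible

section Irreducible

variable {m : ℕ} (I : FairDivision 3 m)

def NoReducibleBundle : Prop :=
  ∀ (B : Finset (Fin m)) i, ¬ I.IsReducible B i

lemma three_mul_MMS_le_sum_add_sum_compl (B : Finset (Fin m)) (a : Fin 3) :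
    3 * I.MMS a ≤ ∑ g ∈ B, I.v a g + ∑ g ∈ Bᶜ, I.v a g := by
  rw [Finset.sum_add_sum_compl]
  exact_mod_cast I.card_mul_MMS_le_sum a

variable {I}

lemma NoReducibleBundle.sum_compl_lt (hred : I.NoReducibleBundle) {B : Finset (Fin m)}
    {i : Fin 3} (hi : 2 / 3 * I.MMS i ≤ ∑ g ∈ B, I.v i g)
    (hc : ∀ k, 4 / 3 * I.MMS k ≤ ∑ g ∈ Bᶜ, I.v k g) {j : Fin 3} (hj : j ≠ i) :
    ∑ g ∈ Bᶜ, I.v j g < 2 * I.MMS j :=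
  lt_of_not_ge fun h => hred B i ⟨hi, j, hj, h, fun k _ _ => hc k⟩

/-- Applying `sum_compl_lt` twice, from two different agents, bounds every agent's share of
`Bᶜ` below `2 * MMS`. -/
lemma NoReducibleBundle.MMS_lt_sum (hred : I.NoReducibleBundle) {B : Finset (Fin m)}
    (hB : ∃ i, 2 / 3 * I.MMS i ≤ ∑ g ∈ B, I.v i g)
    (hc : ∀ k, 4 / 3 * I.MMS k ≤ ∑ g ∈ Bᶜ, I.v k g) (a : Fin 3) :
    I.MMS a < ∑ g ∈ B, I.v a g := by
  obtain ⟨i, hi⟩ := hB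
  obtain ⟨j, hji⟩ := exists_ne i
  have hj : 2 / 3 * I.MMS j ≤ ∑ g ∈ B, I.v j g := by
    linarith [hred.sum_compl_lt hi hc hji, I.three_mul_MMS_le_sum_add_sum_compl B j,
      I.MMS_nonneg j]
  have hlt : ∑ g ∈ Bᶜ, I.v a g < 2 * I.MMS a := by
    by_cases haj : a = j
    · exact haj ▸ hred.sum_compl_lt hi hc hji
    · exact hred.sum_compl_lt hj hc haj
  linarith [I.three_mul_MMS_le_sum_add_sum_compl B a]

lemma NoReducibleBundle.MMS_lt_add (hlow : I.NoHighValuedGood (2 / 3))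
    (hred : I.NoReducibleBundle) {u u' : Fin m} (huu' : u ≠ u') {i : Fin 3}
    (hi : 2 / 3 * I.MMS i ≤ I.v i u + I.v i u') (a : Fin 3) :
    I.MMS a < I.v a u + I.v a u' := by
  have := hred.MMS_lt_sum (B := {u, u'}) ⟨i, by rwa [Finset.sum_pair huu']⟩ (fun k => by
    linarith [I.three_mul_MMS_le_sum_add_sum_compl {u, u'} k, Finset.sum_pair huu' (f := I.v k),
      hlow k u, hlow k u', I.MMS_nonneg k]) a
  rwa [Finset.sum_pair huu'] at this

lemma exists_big_bundle (hμ : ∀ a, 0 < I.MMS a) (hlow : I.NoHighValuedGood (2 / 3))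
    (hred : I.NoReducibleBundle) {G : Finset (Fin m)}
    (hG : ∃ i, 2 / 3 * I.MMS i ≤ ∑ g ∈ G, I.v i g) :
    ∃ B ⊆ G, 2 ≤ B.card ∧ (∀ a, I.MMS a < ∑ g ∈ B, I.v a g ∧ ∑ g ∈ B, I.v a g < 4 / 3 * I.MMS a)
      ∧ ∀ g ∈ B, ∀ a, I.MMS a / 3 < I.v a g := by
  obtain ⟨B, hBG, hB, hmin⟩ :=
    Finset.exists_subset_minimal (fun B => ∃ i, 2 / 3 * I.MMS i ≤ ∑ g ∈ B, I.v i g) hG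
  have herase : ∀ g ∈ B, ∀ a, ∑ g' ∈ B.erase g, I.v a g' < 2 / 3 * I.MMS a :=
    fun g hg a => lt_of_not_ge fun h => hmin _ (Finset.erase_ssubset hg) ⟨a, h⟩
  obtain ⟨g₀, hg₀⟩ : B.Nonempty := Finset.nonempty_iff_ne_empty.mpr <| by
    rintro rfl
    obtain ⟨i, hi⟩ := hB
    linarith [hμ i, Finset.sum_empty (f := I.v i)]
  have hup : ∀ a, ∑ g ∈ B, I.v a g < 4 / 3 * I.MMS a := fun a => by
    rw [← Finset.sum_erase_add _ _ hg₀]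
    linarith [herase g₀ hg₀ a, hlow a g₀]
  have hgt := hred.MMS_lt_sum hB fun k => by
    linarith [I.three_mul_MMS_le_sum_add_sum_compl B k, hup k, hμ k]
  refine ⟨B, hBG, ?_, fun a => ⟨hgt a, hup a⟩, fun g hg a => ?_⟩
  · by_contra! hcard
    have hB₀ : B = {g₀} := Finset.eq_singleton_iff_unique_mem.mpr
      ⟨hg₀, fun g hg => Finset.card_le_one.mp (by omega) g hg g₀ hg₀⟩
    have := hgt 0
    rw [hB₀, Finset.sum_singleton] at this
    linarith [hlow 0 g₀, hμ 0]
  · have := hgt a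
    rw [← Finset.sum_erase_add _ _ hg] at this
    linarith [herase g hg a]

lemma two_thirds_MMS_lt_sum {a : Fin 3} {T : Finset (Fin m)} (hT : 2 ≤ T.card)
    (h : ∀ g ∈ T, I.MMS a / 3 < I.v a g) : 2 / 3 * I.MMS a < ∑ g ∈ T, I.v a g := by
  obtain ⟨u, hu, u', hu', huu'⟩ := Finset.one_lt_card.mp hT
  calc 2 / 3 * I.MMS a < I.v a u + I.v a u' := by linarith [h u hu, h u' hu']
    _ = ∑ g ∈ {u, u'}, I.v a g := (Finset.sum_pair huu').symm
    _ ≤ ∑ g ∈ T, I.v a g :=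
        Finset.sum_le_sum_of_subset_of_nonneg (by simp [Finset.insert_subset_iff, hu, hu'])
          fun g _ _ => I.v_nonneg a g

lemma exists_isApproxMMS_of_five_le_card {F : Finset (Fin m)} (hF : 5 ≤ F.card)
    (hbig : ∀ g ∈ F, ∀ a, I.MMS a / 3 < I.v a g) (hrest : ∀ a, I.MMS a / 3 < ∑ g ∈ Fᶜ, I.v a g) :
    ∃ x, I.IsApproxMMS (2 / 3) x := by
  obtain ⟨g₀, hg₀⟩ : F.Nonempty := Finset.card_pos.mp (by omega)
  obtain ⟨T, hT, hTcard⟩ := Finset.exists_subset_card_eq (s := F.erase g₀) (n := 2)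
    (by rw [Finset.card_erase_of_mem hg₀]; omega)
  have hTF : T ⊆ F := hT.trans (Finset.erase_subset _ _)
  refine I.exists_isApproxMMS_of_bundles (q := 0) (r := 1) (w := 2) (by decide) (by decide)
    (by decide) (Xq := T) (Xr := F.erase g₀ \ T) (Xw := insert g₀ Fᶜ) Finset.disjoint_sdiff
    ?_ ?_ (I.two_thirds_MMS_lt_sum (by omega) fun g hg => hbig g (hTF hg) 0).le
    (I.two_thirds_MMS_lt_sum ?_ fun g hg => hbig g ?_ 1).le ?_
  · exact Finset.disjoint_left.mpr fun g hg => by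
      simp [Finset.ne_of_mem_erase (hT hg), hTF hg]
  · exact Finset.disjoint_left.mpr fun g hg => by
      simp only [Finset.mem_sdiff, Finset.mem_erase] at hg
      simp [hg.1.1, hg.1.2]
  · rw [Finset.card_sdiff_of_subset hT, Finset.card_erase_of_mem hg₀]
    omega
  · exact Finset.mem_of_mem_erase (Finset.mem_sdiff.mp hg).1
  · rw [Finset.sum_insert (by simpa using hg₀)]
    linarith [hbig g₀ hg₀ 2, hrest 2]

structure FourBigGoods (I : FairDivision 3 m) (F : Finset (Fin m)) : Prop where
  card_eq : F.card = 4
  third_lt_v : ∀ g ∈ F, ∀ a, I.MMS a / 3 < I.v a g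
  third_lt_rest : ∀ a, I.MMS a / 3 < ∑ g ∈ Fᶜ, I.v a g
  rest_lt : ∀ a, ∑ g ∈ Fᶜ, I.v a g < 2 / 3 * I.MMS a

lemma exists_isApproxMMS_or_fourBigGoods (hμ : ∀ a, 0 < I.MMS a)
    (hlow : I.NoHighValuedGood (2 / 3)) (hred : I.NoReducibleBundle) :
    (∃ x, I.IsApproxMMS (2 / 3) x) ∨ ∃ F, I.FourBigGoods F := by
  have htotal := I.three_mul_MMS_le_sum_add_sum_compl ∅ 0
  simp only [Finset.sum_empty, Finset.compl_empty, zero_add] at htotal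
  obtain ⟨B₁, -, hcard₁, hval₁, hbig₁⟩ := exists_big_bundle hμ hlow hred (G := Finset.univ)
    ⟨0, by linarith [hμ 0]⟩
  obtain ⟨B₂, hB₂, hcard₂, hval₂, hbig₂⟩ := exists_big_bundle hμ hlow hred (G := B₁ᶜ)
    ⟨0, by linarith [I.three_mul_MMS_le_sum_add_sum_compl B₁ 0, (hval₁ 0).2, hμ 0]⟩
  have hdisj : Disjoint B₁ B₂ := Finset.disjoint_of_subset_right hB₂ disjoint_compl_right
  set F := B₁ ∪ B₂ with hF
  have hbig : ∀ g ∈ F, ∀ a, I.MMS a / 3 < I.v a g := fun g hg =>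
    (Finset.mem_union.mp hg).elim (hbig₁ g) (hbig₂ g)
  have hrest : ∀ a, I.MMS a / 3 < ∑ g ∈ Fᶜ, I.v a g := fun a => by
    linarith [I.three_mul_MMS_le_sum_add_sum_compl F a, Finset.sum_union hdisj (f := I.v a),
      (hval₁ a).2, (hval₂ a).2]
  by_cases hC : ∃ a, 2 / 3 * I.MMS a ≤ ∑ g ∈ Fᶜ, I.v a g
  · obtain ⟨a, ha⟩ := hC
    obtain ⟨b, hba⟩ := exists_ne a
    obtain ⟨c, hac, hbc⟩ := Fin.exists_ne_ne hba.symm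
    left
    exact I.exists_isApproxMMS_of_bundles hba.symm hac hbc
      (Finset.subset_union_left.disjoint_compl_right).symm
      (Finset.subset_union_right.disjoint_compl_right).symm hdisj ha
      (by linarith [(hval₁ b).1, hμ b]) (by linarith [(hval₂ c).1, hμ c])
  push Not at hC
  by_cases h5 : 5 ≤ F.card
  · exact Or.inl (I.exists_isApproxMMS_of_five_le_card h5 hbig hrest)
  · refine Or.inr ⟨F, ?_, hbig, hrest, hC⟩
    have : F.card = B₁.card + B₂.card := by rw [hF, Finset.card_union_of_disjoint hdisj]
    omega

end Irreducible

namespace FourBigGoods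

variable {m : ℕ} {I : FairDivision 3 m} {F : Finset (Fin m)}

lemma MMS_lt_add (hF : I.FourBigGoods F) (hlow : I.NoHighValuedGood (2 / 3))
    (hred : I.NoReducibleBundle) {u u' : Fin m} (hu : u ∈ F) (hu' : u' ∈ F) (huu' : u ≠ u')
    (a : Fin 3) : I.MMS a < I.v a u + I.v a u' :=
  hred.MMS_lt_add hlow huu' (i := 0)
    (by linarith [hF.third_lt_v u hu 0, hF.third_lt_v u' hu' 0]) a

lemma card_erase (hF : I.FourBigGoods F) {g : Fin m} (hg : g ∈ F) : (F.erase g).card = 3 := by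
  rw [Finset.card_erase_of_mem hg, hF.card_eq]

lemma MMS_lt_add_rest (hF : I.FourBigGoods F) (hlow : I.NoHighValuedGood (2 / 3))
    (hred : I.NoReducibleBundle) {g : Fin m} (hg : g ∈ F) (a : Fin 3) :
    I.MMS a < I.v a g + ∑ g' ∈ Fᶜ, I.v a g' := by
  have hgC : g ∉ Fᶜ := by simpa using hg
  obtain ⟨x, y, z, hxy, hxz, hyz, hxyz⟩ := Finset.card_eq_three.mp (hF.card_erase hg)
  have hmem : ∀ u ∈ F.erase g, u ∈ F := fun u => Finset.mem_of_mem_erase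
  have hx := hmem x (by simp [hxyz])
  have hy := hmem y (by simp [hxyz])
  have hz := hmem z (by simp [hxyz])
  have := hred.MMS_lt_sum (B := insert g Fᶜ)
    ⟨0, by rw [Finset.sum_insert hgC]; linarith [hF.third_lt_v g hg 0, hF.third_lt_rest 0]⟩
    (fun k => by
      rw [Finset.compl_insert, compl_compl, hxyz, Finset.sum_insert (by simp [hxy, hxz]),
        Finset.sum_pair hyz]
      linarith [hF.MMS_lt_add hlow hred hx hy hxy k, hF.MMS_lt_add hlow hred hx hz hxz k,
        hF.MMS_lt_add hlow hred hy hz hyz k, I.MMS_nonneg k]) a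
  rwa [Finset.sum_insert hgC] at this

/-- `s a` is the value to agent `a` of her second most valuable good in `F`. -/
lemma exists_second_value (hF : I.FourBigGoods F) (hlow : I.NoHighValuedGood (2 / 3))
    (hred : I.NoReducibleBundle) :
    ∃ s : Fin 3 → ℝ, (∀ a, ∃ g ∈ F, I.v a g = s a) ∧ (∀ a, I.MMS a / 2 < s a) ∧
      (∀ q r, q ≠ r → ∃ bq ∈ F, ∃ br ∈ F, bq ≠ br ∧ s q ≤ I.v q bq ∧ s r ≤ I.v r br) ∧
      ∀ a, ∀ u ∈ F, ∀ u' ∈ F, u ≠ u' → I.v a u ≤ s a ∨ I.v a u' ≤ s a := by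
  choose x hx y hy hxy hyx hymax using
    fun a => Finset.exists_top_two (by rw [hF.card_eq]; norm_num : 2 ≤ F.card) (I.v a)
  refine ⟨fun a => I.v a (y a), fun a => ⟨y a, hy a, rfl⟩, fun a => ?_, fun q r hqr => ?_,
    fun a u hu u' hu' huu' => ?_⟩
  · obtain ⟨u, hu, u', hu', huu'⟩ := Finset.one_lt_card.mp
      (by rw [hF.card_erase (hx a)]; norm_num : 1 < (F.erase (x a)).card)
    linarith [hymax a u (Finset.mem_of_mem_erase hu) (Finset.ne_of_mem_erase hu),
      hymax a u' (Finset.mem_of_mem_erase hu') (Finset.ne_of_mem_erase hu'),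
      hF.MMS_lt_add hlow hred (Finset.mem_of_mem_erase hu) (Finset.mem_of_mem_erase hu') huu' a]
  · by_cases h : x q = x r
    · exact ⟨x q, hx q, y r, hy r, h ▸ hxy r, hyx q, le_rfl⟩
    · exact ⟨x q, hx q, x r, hx r, h, hyx q, hyx r⟩
  · by_cases h : u = x a
    · exact Or.inr (hymax a u' hu' (h ▸ huu'.symm))
    · exact Or.inl (hymax a u hu h)

lemma exists_isApproxMMS_of_split_rest (hF : I.FourBigGoods F) {q r : Fin 3} (hqr : q ≠ r)
    {bq br : Fin m} (hbq : bq ∈ F) (hbr : br ∈ F) (hbqr : bq ≠ br) {S : Finset (Fin m)}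
    (hS : S ⊆ Fᶜ) (hq : 2 / 3 * I.MMS q ≤ I.v q bq + ∑ g ∈ S, I.v q g)
    (hr : 2 / 3 * I.MMS r ≤ I.v r br + ∑ g ∈ Fᶜ \ S, I.v r g) :
    ∃ x, I.IsApproxMMS (2 / 3) x := by
  obtain ⟨w, hqw, hrw⟩ := Fin.exists_ne_ne hqr
  have hSF : ∀ g ∈ S, g ∉ F := fun g hg => Finset.mem_compl.mp (hS hg)
  refine I.exists_isApproxMMS_of_bundles hqr hqw hrw (Xq := insert bq S)
    (Xr := insert br (Fᶜ \ S)) (Xw := F \ {bq, br}) ?_ ?_ ?_ ?_ ?_ ?_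
  · refine Finset.disjoint_left.mpr fun g hg hg' => ?_
    simp only [Finset.mem_insert, Finset.mem_sdiff, Finset.mem_compl] at hg hg'
    rcases hg with rfl | hg <;> rcases hg' with rfl | hg'
    exacts [hbqr rfl, hg'.1 hbq, hSF g hg hbr, hg'.2 hg]
  · refine Finset.disjoint_left.mpr fun g hg hg' => ?_
    simp only [Finset.mem_insert, Finset.mem_sdiff] at hg hg'
    rcases hg with rfl | hg
    exacts [hg'.2 (by simp), hSF g hg hg'.1]
  · refine Finset.disjoint_left.mpr fun g hg hg' => ?_
    simp only [Finset.mem_insert, Finset.mem_sdiff, Finset.mem_compl] at hg hg'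
    rcases hg with rfl | hg
    exacts [hg'.2 (by simp), hg.1 hg'.1]
  · rwa [Finset.sum_insert fun h => hSF bq h hbq]
  · rwa [Finset.sum_insert fun h => (Finset.mem_compl.mp (Finset.mem_sdiff.mp h).1) hbr]
  · refine (I.two_thirds_MMS_lt_sum ?_ fun g hg => hF.third_lt_v g (Finset.mem_sdiff.mp hg).1 w).le
    rw [Finset.card_sdiff_of_subset (by simp [Finset.insert_subset_iff, hbq, hbr]),
      Finset.card_pair hbqr, hF.card_eq]

lemma exists_isApproxMMS_of_halves_outside (hF : I.FourBigGoods F) {E : Fin m} (hE : E ∉ F)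
    {q r : Fin 3} (hqr : q ≠ r) (hdq : I.divisible q E) (hdr : I.divisible r E) {bq br : Fin m}
    (hbq : bq ∈ F) (hbr : br ∈ F) (hbqr : bq ≠ br)
    (hq : 2 / 3 * I.MMS q ≤ I.v q bq + I.v q E / 2)
    (hr : 2 / 3 * I.MMS r ≤ I.v r br + I.v r E / 2) :
    ∃ x, I.IsApproxMMS (2 / 3) x := by
  obtain ⟨w, hqw, hrw⟩ := Fin.exists_ne_ne hqr
  refine I.exists_isApproxMMS_of_bundles_of_halves hqr hqw hrw (Xq := {bq}) (Xr := {br})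
    (Xw := F \ {bq, br}) (by simpa using hbqr) (by simp) (by simp) (σ := E)
    (by simpa using fun h : E = bq => hE (h ▸ hbq)) (by simpa using fun h : E = br => hE (h ▸ hbr))
    (fun h => hE (Finset.mem_sdiff.mp h).1) hdq hdr (by simpa using hq) (by simpa using hr) ?_
  refine (I.two_thirds_MMS_lt_sum ?_ fun g hg => hF.third_lt_v g (Finset.mem_sdiff.mp hg).1 w).le
  rw [Finset.card_sdiff_of_subset (by simp [Finset.insert_subset_iff, hbq, hbr]),
    Finset.card_pair hbqr, hF.card_eq]

lemma exists_isApproxMMS_of_halves_inside (hF : I.FourBigGoods F)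
    (hlow : I.NoHighValuedGood (2 / 3)) (hred : I.NoReducibleBundle) {σ : Fin m} (hσ : σ ∈ F)
    {q r : Fin 3} (hqr : q ≠ r) (hdq : I.divisible q σ) (hdr : I.divisible r σ) :
    ∃ x, I.IsApproxMMS (2 / 3) x := by
  obtain ⟨w, hqw, hrw⟩ := Fin.exists_ne_ne hqr
  obtain ⟨u₁, u₂, u₃, h12, h13, h23, hu⟩ := Finset.card_eq_three.mp (hF.card_erase hσ)
  have hmem : ∀ u ∈ F.erase σ, u ≠ σ ∧ u ∈ F := fun u => Finset.mem_erase.mp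
  obtain ⟨hu₁σ, hu₁⟩ := hmem u₁ (by simp [hu])
  obtain ⟨hu₂σ, hu₂⟩ := hmem u₂ (by simp [hu])
  obtain ⟨hu₃σ, hu₃⟩ := hmem u₃ (by simp [hu])
  refine I.exists_isApproxMMS_of_bundles_of_halves hqr hqw hrw (Xq := {u₁}) (Xr := {u₂})
    (Xw := insert u₃ Fᶜ) (by simpa using h12) (by simp [h13, hu₁]) (by simp [h23, hu₂])
    (σ := σ) (by simpa using hu₁σ.symm) (by simpa using hu₂σ.symm) (by simp [hu₃σ.symm, hσ])
    hdq hdr ?_ ?_ ?_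
  · rw [Finset.sum_singleton]
    linarith [hF.MMS_lt_add hlow hred hu₁ hσ hu₁σ q, hlow q σ]
  · rw [Finset.sum_singleton]
    linarith [hF.MMS_lt_add hlow hred hu₂ hσ hu₂σ r, hlow r σ]
  · rw [Finset.sum_insert (by simpa using hu₃)]
    linarith [hF.MMS_lt_add_rest hlow hred hu₃ w, I.MMS_nonneg w]

/-- Otherwise `y` would regard the four goods of `insert E F` other than `σ` as indivisible,
and `MMS_lt_of_not_divisible` would push `MMS y` below itself. -/
lemma exists_ne_divisible (hF : I.FourBigGoods F) (hlow : I.NoHighValuedGood (2 / 3))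
    {y : Fin 3} {s : ℝ} (hs_pair : ∀ u ∈ F, ∀ u' ∈ F, u ≠ u' → I.v y u ≤ s ∨ I.v y u' ≤ s)
    (hs_half : I.MMS y / 2 < s) {E : Fin m} (hEC : E ∈ Fᶜ)
    (hdust : ∑ g ∈ Fᶜ.erase E, I.v y g < 2 / 3 * I.MMS y - s) {σ : Fin m}
    (hσ : σ ∈ insert E F) : ∃ g ∈ insert E F, g ≠ σ ∧ I.divisible y g := by
  by_contra! hind
  have hEF : E ∉ F := Finset.mem_compl.mp hEC
  have hE : I.v y E + ∑ g ∈ Fᶜ.erase E, I.v y g < 2 / 3 * I.MMS y := by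
    rw [add_comm, Finset.sum_erase_add _ _ hEC]
    exact hF.rest_lt y
  have hrest : ∑ g ∈ ((insert E F).erase σ)ᶜ, I.v y g
      = I.v y σ + ∑ g ∈ Fᶜ.erase E, I.v y g := by
    rw [Finset.compl_erase, Finset.compl_insert, Finset.sum_insert fun h =>
      Finset.mem_compl.mp (Finset.mem_of_mem_erase h)
        ((Finset.mem_insert.mp hσ).resolve_left (Finset.ne_of_mem_erase h))]
  refine lt_irrefl (I.MMS y) (I.MMS_lt_of_not_divisible (S := (insert E F).erase σ) ?_
    (fun g hg => hind g (Finset.mem_of_mem_erase hg) (Finset.ne_of_mem_erase hg)) ?_ ?_)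
  · rw [Finset.card_erase_of_mem hσ, Finset.card_insert_of_notMem hEF, hF.card_eq]
  · rw [hrest]
    rcases Finset.mem_insert.mp hσ with rfl | _
    · linarith [I.MMS_nonneg y]
    · linarith [hlow y σ, I.v_nonneg y σ]
  · intro u hu u' hu' huu'
    rw [hrest]
    obtain ⟨-, hu⟩ := Finset.mem_erase.mp hu
    obtain ⟨-, hu'⟩ := Finset.mem_erase.mp hu'
    by_cases hE3 : u = E ∨ u' = E ∨ σ = E
    · rcases hE3 with h | h | h <;> rw [h] <;>
        linarith [hlow y u, hlow y u', hlow y σ]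
    · push Not at hE3
      have huF := (Finset.mem_insert.mp hu).resolve_left hE3.1
      have hu'F := (Finset.mem_insert.mp hu').resolve_left hE3.2.1
      rcases hs_pair u huF u' hu'F huu' with h | h <;>
        linarith [hlow y u, hlow y u', hlow y σ]

lemma exists_isApproxMMS (hF : I.FourBigGoods F) (hlow : I.NoHighValuedGood (2 / 3))
    (hred : I.NoReducibleBundle) : ∃ x, I.IsApproxMMS (2 / 3) x := by
  obtain ⟨s, hsF, hs_half, hs_two, hs_pair⟩ := hF.exists_second_value hlow hred
  have hs_lt : ∀ a, s a < 2 / 3 * I.MMS a := fun a => by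
    obtain ⟨g, -, hg⟩ := hsF a
    exact hg ▸ hlow a g
  have hs_rest : ∀ a, I.MMS a < s a + ∑ g ∈ Fᶜ, I.v a g := fun a => by
    obtain ⟨g, hg, hgs⟩ := hsF a
    exact hgs ▸ hF.MMS_lt_add_rest hlow hred hg a
  -- `2 / 3 * MMS a - s a` is what agent `a` lacks with her second best good of `F`.
  by_cases hsplit : ∃ q r, q ≠ r ∧ ∃ S ⊆ Fᶜ, 2 / 3 * I.MMS q - s q ≤ ∑ g ∈ S, I.v q g ∧
      2 / 3 * I.MMS r - s r ≤ ∑ g ∈ Fᶜ \ S, I.v r g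
  · obtain ⟨q, r, hqr, S, hS, hq, hr⟩ := hsplit
    obtain ⟨bq, hbq, br, hbr, hbqr, hsq, hsr⟩ := hs_two q r hqr
    exact hF.exists_isApproxMMS_of_split_rest hqr hbq hbr hbqr hS (by linarith) (by linarith)
  push Not at hsplit
  obtain ⟨E, hEC, hdust⟩ := Finset.exists_mem_forall_sum_erase_lt (C := Fᶜ) (f := I.v)
    (d := fun a => 2 / 3 * I.MMS a - s a) (fun a => by linarith [hs_lt a])
    (fun a => by linarith [hs_rest a, hs_half a])
    (fun q r hqr S hS => or_iff_not_imp_left.mpr fun h => hsplit q r hqr S hS (not_lt.mp h))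
  have hEF : E ∉ F := Finset.mem_compl.mp hEC
  have hvE : ∀ a, 2 / 3 * I.MMS a - s a < I.v a E / 2 := fun a => by
    linarith [hdust a, Finset.sum_erase_add _ (I.v a) hEC, hs_rest a, hs_half a]
  obtain ⟨σ, hσ, a, b, hab, ha, hb⟩ := Finset.exists_mem_of_forall_exists_ne (D := I.divisible)
    (by rw [Finset.card_insert_of_notMem hEF, hF.card_eq]; simp) (Finset.insert_nonempty E F)
    fun y σ hσ => hF.exists_ne_divisible hlow (hs_pair y) (hs_half y) hEC (hdust y) hσ
  rcases Finset.mem_insert.mp hσ with rfl | hσF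
  · obtain ⟨bq, hbq, br, hbr, hbqr, hsq, hsr⟩ := hs_two a b hab
    exact hF.exists_isApproxMMS_of_halves_outside hEF hab ha hb hbq hbr hbqr
      (by linarith [hvE a]) (by linarith [hvE b])
  · exact hF.exists_isApproxMMS_of_halves_inside hlow hred hσF hab ha hb

end FourBigGoods

end FairDivision

/-- A three-agent instance with no (2/3)-high-valued good and no reducible bundle
admits a (2/3)-MMS allocation. -/
theorem three_agent_no_reducible_two_thirds_mms (m : ℕ) (I : FairDivision 3 m)
    (hNoHigh : ∀ a g, I.v a g < 2 / 3 * I.MMS a)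
    (hNoRed : ∀ (B : Finset (Fin m)) (i : Fin 3), ¬ I.IsReducible B i) :
    ∃ x, I.IsAllocation x ∧ ∀ i, 2 / 3 * I.MMS i ≤ I.util i (x i) := by
  rcases Nat.eq_zero_or_pos m with rfl | hm
  · have hμ : ∀ a, 2 / 3 * I.MMS a ≤ ∑ g ∈ (∅ : Finset (Fin 0)), I.v a g := fun a => by
      have := I.card_mul_MMS_le_sum a
      simp only [Finset.univ_eq_empty, Finset.sum_empty, Nat.cast_ofNat] at this ⊢
      linarith
    exact I.exists_isApproxMMS_of_bundles (q := 0) (r := 1) (w := 2) (by decide) (by decide)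
      (by decide) (by simp) (by simp) (by simp) (hμ 0) (hμ 1) (hμ 2)
  have hμ : ∀ a, 0 < I.MMS a := fun a => by
    linarith [hNoHigh a ⟨0, hm⟩, I.v_nonneg a ⟨0, hm⟩]
  rcases I.exists_isApproxMMS_or_fourBigGoods hμ hNoHigh hNoRed with h | ⟨F, hF⟩
  · exact h
  · exact hF.exists_isApproxMMS hNoHigh hNoRed
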